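/- arXiv:2208.09899 — 2 statements merged into one kernel-verified Lean document; each statement's English description precedes it below -/
import Mathlib

section
/- Cospatial residual relation (Theorem 2.1): Let n, m, s be positive integers, A ∈ ℂ^{n×n} and B ∈ ℂ^{n×s}. Suppose block vectors V_1, …, V_{m+1} ∈ ℂ^{n×s}, a matrix ℋ_m ∈ ℂ^{ms×ms}, a matrix H_{m+1,m} ∈ ℂ^{s×s}, and B̂ ∈ ℂ^{s×s} satisfy B = V_1 B̂ and the block Arnoldi relation A 𝒱_m = 𝒱_m ℋ_m + V_{m+1} H_{m+1,m} Ê_m^*. Let M ∈ ℂ^{ms×s}, assume ℋ_m + M Ê_m^* is invertible, and set Ξ_m := (ℋ_m + M Ê_m^*)^{-1} Ê_1 B̂, X_m := 𝒱_m Ξ_m, R_m := B − A X_m, and U_m := 𝒱_m M − V_{m+1} H_{m+1,m}. Then R_m = U_m (Ê_m^* Ξ_m). -/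
open Matrix

noncomputable section

/-- Concatenation of `m` block vectors, each `n × s`, into an `n × (m·s)` matrix. -/
def blockCat {n m s : ℕ} (V : Fin m → Matrix (Fin n) (Fin s) ℂ) :
    Matrix (Fin n) (Fin m × Fin s) ℂ :=
  Matrix.of fun i p => V p.1 i p.2

/-- The `k`-th block unit vector `Ê_k = e_k ⊗ I_s ∈ ℂ^{ms × s}`. -/
def blockUnit (m s : ℕ) (k : Fin m) : Matrix (Fin m × Fin s) (Fin s) ℂ :=
  Matrix.of fun p j => if p.1 = k ∧ p.2 = j then 1 else 0

lemma blockCat_mul_blockUnit {n m s : ℕ} (V : Fin m → Matrix (Fin n) (Fin s) ℂ)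
    (k : Fin m) : blockCat V * blockUnit m s k = V k := by
  ext i j
  simp only [mul_apply, blockCat, blockUnit, of_apply, Fintype.sum_prod_type,
    mul_ite, mul_one, mul_zero]
  rw [Finset.sum_eq_single k]
  · simp
  · intro b _ hb; simp [hb]
  · simp

/-- Cospatial residual relation: `R_m = U_m (Ê_m^* Ξ_m)`. -/
theorem cospatial_residual_relation
    {n m s : ℕ} (hn : 0 < n) (hm : 0 < m) (hs : 0 < s)
    (A : Matrix (Fin n) (Fin n) ℂ) (B : Matrix (Fin n) (Fin s) ℂ)
    (V : Fin (m + 1) → Matrix (Fin n) (Fin s) ℂ)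
    (ℋ : Matrix (Fin m × Fin s) (Fin m × Fin s) ℂ)
    (H Bhat : Matrix (Fin s) (Fin s) ℂ)
    (M : Matrix (Fin m × Fin s) (Fin s) ℂ)
    (Em E1 : Matrix (Fin m × Fin s) (Fin s) ℂ)
    (hEm : Em = blockUnit m s ⟨m - 1, by omega⟩)
    (hE1 : E1 = blockUnit m s ⟨0, hm⟩)
    (𝒱 : Matrix (Fin n) (Fin m × Fin s) ℂ)
    (h𝒱 : 𝒱 = blockCat fun k => V k.castSucc)
    (hB : B = V 0 * Bhat)
    (harnoldi : A * 𝒱 = 𝒱 * ℋ + V (Fin.last m) * H * Emᴴ)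
    (hinv : IsUnit (ℋ + M * Emᴴ))
    (Ξ : Matrix (Fin m × Fin s) (Fin s) ℂ)
    (hΞ : Ξ = (ℋ + M * Emᴴ)⁻¹ * E1 * Bhat)
    (X R U : Matrix (Fin n) (Fin s) ℂ)
    (hX : X = 𝒱 * Ξ) (hR : R = B - A * X)
    (hU : U = 𝒱 * M - V (Fin.last m) * H) :
    R = U * (Emᴴ * Ξ) := by
  have hkey : (ℋ + M * Emᴴ) * Ξ = E1 * Bhat := by
    rw [hΞ, ← Matrix.mul_assoc, ← Matrix.mul_assoc,
      Matrix.mul_nonsing_inv _ ((Matrix.isUnit_iff_isUnit_det _).mp hinv), Matrix.one_mul]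
  have hHΞ : ℋ * Ξ = E1 * Bhat - M * (Emᴴ * Ξ) := by
    rw [← hkey]; rw [Matrix.add_mul, Matrix.mul_assoc]; abel
  have hV1 : 𝒱 * E1 = V 0 := by
    rw [h𝒱, hE1, blockCat_mul_blockUnit]
    congr 1
  rw [hR, hX, ← Matrix.mul_assoc, harnoldi, hU, Matrix.add_mul, Matrix.mul_assoc 𝒱, hHΞ]
  rw [Matrix.mul_sub, ← Matrix.mul_assoc, hV1, ← hB, Matrix.sub_mul,
    Matrix.mul_assoc 𝒱, Matrix.mul_assoc, Matrix.mul_assoc]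
  abel
end
end

section
/- Residual minimality of BGMRES (harmonically modified BFOM): Let A ∈ ℂ^{n×n}, B ∈ ℂ^{n×s}, and suppose V_1, …, V_{m+1} ∈ ℂ^{n×s}, ℋ_m ∈ ℂ^{ms×ms} invertible, H_{m+1,m} ∈ ℂ^{s×s}, and B̂ ∈ ℂ^{s×s} satisfy B = V_1 B̂, the block Arnoldi relation A 𝒱_m = 𝒱_m ℋ_m + V_{m+1} H_{m+1,m} Ê_m^*, and orthonormality 𝒱_{m+1}^* 𝒱_{m+1} = I_{(m+1)s} for 𝒱_{m+1} := [V_1 … V_{m+1}]. Let ℳ := ℋ_m^{-*} (Ê_m H_{m+1,m}^* H_{m+1,m}) Ê_m^*, assume ℋ_m + ℳ is invertible, and set Ξ_m := (ℋ_m + ℳ)^{-1} Ê_1 B̂ and X_m := 𝒱_m Ξ_m. Then for every Y ∈ ℂ^{ms×s}, ‖B − A X_m‖_F ≤ ‖B − A 𝒱_m Y‖_F. -/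
open Matrix

noncomputable section

/-- Frobenius norm of a complex matrix. -/
def frobNorm {I J : Type*} [Fintype I] [Fintype J] (X : Matrix I J ℂ) : ℝ :=
  Real.sqrt (∑ i, ∑ j, ‖X i j‖ ^ 2)

/-!
Since `A 𝒱_m = 𝒱_m ℋ_m + V_{m+1} H Ê_mᴴ` and `[𝒱_m V_{m+1}]` has orthonormal columns,
`(A 𝒱_m)ᴴ (B - A 𝒱_m Ξ) = ℋ_mᴴ (Ê_1 B̂ - ℋ_m Ξ) - Ê_m Hᴴ H Ê_mᴴ Ξ`
`                      = ℋ_mᴴ (Ê_1 B̂ - (ℋ_m + ℳ) Ξ)`,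
which vanishes for `Ξ = Ξ_m`. So `Ξ_m` solves the normal equations of `min_Y ‖B - A 𝒱_m Y‖_F`,
and Pythagoras for the trace inner product `tr (Xᴴ Y)` makes it a minimiser.
-/

section LeastSquares

variable {I J K : Type*} [Fintype I] [Fintype J] [Fintype K]

lemma re_trace_conjTranspose_mul_self (X : Matrix I J ℂ) :
    (trace (Xᴴ * X)).re = ∑ i, ∑ j, ‖X i j‖ ^ 2 := by
  rw [Finset.sum_comm]
  simp only [trace, diag, mul_apply, conjTranspose_apply, Complex.re_sum]
  refine Finset.sum_congr rfl fun j _ => Finset.sum_congr rfl fun i _ => ?_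
  rw [Complex.star_def, Complex.conj_mul']
  norm_cast

lemma frobNorm_eq_sqrt_re_trace (X : Matrix I J ℂ) :
    frobNorm X = √(trace (Xᴴ * X)).re := by
  rw [frobNorm, re_trace_conjTranspose_mul_self]

theorem frobNorm_sub_mul_le_of_conjTranspose_mul_sub_eq_zero {P : Matrix I K ℂ}
    {C : Matrix I J ℂ} {Ξ : Matrix K J ℂ} (h : Pᴴ * (C - P * Ξ) = 0) (Y : Matrix K J ℂ) :
    frobNorm (C - P * Ξ) ≤ frobNorm (C - P * Y) := by
  set R := C - P * Ξ
  have hsplit : C - P * Y = R + P * (Ξ - Y) := by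
    simp only [R, Matrix.mul_sub]; abel
  have hR : Rᴴ * P = 0 := by
    rw [← conjTranspose_conjTranspose P, ← conjTranspose_mul, h, conjTranspose_zero]
  have pythagoras :
      (C - P * Y)ᴴ * (C - P * Y) = Rᴴ * R + (P * (Ξ - Y))ᴴ * (P * (Ξ - Y)) := by
    rw [hsplit, conjTranspose_add, conjTranspose_mul, Matrix.add_mul, Matrix.mul_add,
      Matrix.mul_add, ← Matrix.mul_assoc Rᴴ, hR, Matrix.mul_assoc (Ξ - Y)ᴴ, h]
    simp only [Matrix.zero_mul, Matrix.mul_zero, add_zero, zero_add]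
  rw [frobNorm_eq_sqrt_re_trace, frobNorm_eq_sqrt_re_trace, pythagoras, trace_add,
    Complex.add_re, re_trace_conjTranspose_mul_self (P * (Ξ - Y))]
  gcongr
  exact le_add_of_nonneg_right (by positivity)

end LeastSquares

section Orthonormal

variable {R I J K M N : Type*} [Fintype I] [Fintype J] [Fintype K] [DecidableEq J]
  [DecidableEq K]

lemma conjTranspose_add_mul_mul_add_mul_of_orthonormal [Ring R] [StarRing R]
    {U : Matrix I J R} {W : Matrix I K R} (hU : Uᴴ * U = 1) (hUW : Uᴴ * W = 0)
    (hW : Wᴴ * W = 1) (P : Matrix J M R) (Q : Matrix K M R) (P' : Matrix J N R)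
    (Q' : Matrix K N R) :
    (U * P + W * Q)ᴴ * (U * P' + W * Q') = Pᴴ * P' + Qᴴ * Q' := by
  have hWU : Wᴴ * U = 0 := by
    rw [← conjTranspose_conjTranspose U, ← conjTranspose_mul, hUW, conjTranspose_zero]
  simp only [conjTranspose_add, conjTranspose_mul, Matrix.add_mul, Matrix.mul_add,
    Matrix.mul_assoc]
  simp only [← Matrix.mul_assoc Uᴴ, ← Matrix.mul_assoc Wᴴ, hU, hUW, hW, hWU, Matrix.one_mul,
    Matrix.zero_mul, Matrix.mul_zero, add_zero, zero_add]

theorem conjTranspose_mul_sub_mul_eq_zero_of_harmonic [CommRing R] [StarRing R]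
    {U : Matrix I J R} {W : Matrix I K R} (hU : Uᴴ * U = 1) (hUW : Uᴴ * W = 0)
    (hW : Wᴴ * W = 1) {A : Matrix I I R} {T : Matrix J J R} {G : Matrix K J R}
    (hAU : A * U = U * T + W * G) (hT : IsUnit T) {c Ξ : Matrix J M R}
    (hΞ : (T + (T⁻¹)ᴴ * (Gᴴ * G)) * Ξ = c) :
    (A * U)ᴴ * (U * c - A * U * Ξ) = 0 := by
  have hTdet : IsUnit Tᴴ.det := (isUnit_iff_isUnit_det _).mp ((isUnit_conjTranspose T).mpr hT)
  have hres : U * c - A * U * Ξ = U * (c - T * Ξ) + W * (-(G * Ξ)) := by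
    rw [hAU]
    simp only [Matrix.add_mul, Matrix.mul_sub, Matrix.mul_neg, Matrix.mul_assoc]
    abel
  rw [hres, hAU, conjTranspose_add_mul_mul_add_mul_of_orthonormal hU hUW hW, Matrix.mul_neg,
    ← Matrix.mul_assoc Gᴴ, ← mul_nonsing_inv_cancel_left _ (Gᴴ * G) hTdet,
    ← conjTranspose_nonsing_inv, Matrix.mul_assoc Tᴴ, ← sub_eq_add_neg, ← Matrix.mul_sub,
    sub_sub, ← Matrix.add_mul, hΞ, sub_self, Matrix.mul_zero]

end Orthonormal

lemma conjTranspose_submatrix_mul_submatrix {R I J K L : Type*} [Star R] [Mul R]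
    [AddCommMonoid R] [Fintype I] (U : Matrix I J R) (f : K → J) (g : L → J) :
    (U.submatrix id f)ᴴ * U.submatrix id g = (Uᴴ * U).submatrix f g := by
  rw [conjTranspose_submatrix, submatrix_mul _ _ _ _ _ Function.bijective_id]

section Blocks

variable {n m s : ℕ} {V : Fin (m + 1) → Matrix (Fin n) (Fin s) ℂ}

lemma blockCat_castSucc_eq_submatrix :
    (blockCat fun k => V k.castSucc) = (blockCat V).submatrix id (Prod.map Fin.castSucc id) :=
  rfl

lemma submatrix_blockCat_mk (k : Fin (m + 1)) : (blockCat V).submatrix id (Prod.mk k) = V k :=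
  rfl

lemma conjTranspose_blockCat_castSucc_mul_self (horth : (blockCat V)ᴴ * blockCat V = 1) :
    (blockCat fun k => V k.castSucc)ᴴ * (blockCat fun k => V k.castSucc) = 1 := by
  rw [blockCat_castSucc_eq_submatrix, conjTranspose_submatrix_mul_submatrix, horth,
    submatrix_one _ ((Fin.castSucc_injective m).prodMap Function.injective_id)]

lemma conjTranspose_blockCat_castSucc_mul_last (horth : (blockCat V)ᴴ * blockCat V = 1) :
    (blockCat fun k => V k.castSucc)ᴴ * V (Fin.last m) = 0 := by
  ext ⟨k, i⟩ j
  rw [blockCat_castSucc_eq_submatrix, ← submatrix_blockCat_mk (V := V),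
    conjTranspose_submatrix_mul_submatrix, horth]
  simp [one_apply, (Fin.castSucc_lt_last k).ne]

lemma conjTranspose_mul_self_of_blockCat (horth : (blockCat V)ᴴ * blockCat V = 1)
    (k : Fin (m + 1)) : (V k)ᴴ * V k = 1 := by
  rw [← submatrix_blockCat_mk (V := V), conjTranspose_submatrix_mul_submatrix, horth,
    submatrix_one _ (Prod.mk_right_injective _)]

end Blocks

/-- Residual minimality of BGMRES (harmonically modified BFOM). -/
theorem bgmres_residual_minimality
    {n m s : ℕ} (hm : 0 < m)
    (A : Matrix (Fin n) (Fin n) ℂ) (B : Matrix (Fin n) (Fin s) ℂ)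
    (V : Fin (m + 1) → Matrix (Fin n) (Fin s) ℂ)
    (ℋ : Matrix (Fin m × Fin s) (Fin m × Fin s) ℂ) (hℋ : IsUnit ℋ)
    (H Bhat : Matrix (Fin s) (Fin s) ℂ)
    (Em E1 : Matrix (Fin m × Fin s) (Fin s) ℂ)
    (hE1 : E1 = blockUnit m s ⟨0, hm⟩)
    (𝒱 : Matrix (Fin n) (Fin m × Fin s) ℂ)
    (h𝒱 : 𝒱 = blockCat fun k => V k.castSucc)
    (hB : B = V 0 * Bhat)
    (harnoldi : A * 𝒱 = 𝒱 * ℋ + V (Fin.last m) * H * Emᴴ)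
    (horth : (blockCat V)ᴴ * blockCat V = 1)
    (ℳ : Matrix (Fin m × Fin s) (Fin m × Fin s) ℂ)
    (hℳ : ℳ = (ℋ⁻¹)ᴴ * (Em * Hᴴ * H) * Emᴴ)
    (hinv : IsUnit (ℋ + ℳ))
    (Ξ : Matrix (Fin m × Fin s) (Fin s) ℂ)
    (hΞ : Ξ = (ℋ + ℳ)⁻¹ * E1 * Bhat)
    (X : Matrix (Fin n) (Fin s) ℂ) (hX : X = 𝒱 * Ξ) :
    ∀ Y : Matrix (Fin m × Fin s) (Fin s) ℂ,
      frobNorm (B - A * X) ≤ frobNorm (B - A * (𝒱 * Y)) := by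
  intro Y
  have hB𝒱 : B = 𝒱 * (E1 * Bhat) := by
    rw [hB, h𝒱, hE1, ← Matrix.mul_assoc, blockCat_mul_blockUnit]
    rfl
  have hℳ' : ℳ = (ℋ⁻¹)ᴴ * ((H * Emᴴ)ᴴ * (H * Emᴴ)) := by
    simp only [hℳ, conjTranspose_mul, conjTranspose_conjTranspose, Matrix.mul_assoc]
  have hℋℳΞ : (ℋ + ℳ) * Ξ = E1 * Bhat := by
    rw [hΞ, Matrix.mul_assoc, mul_nonsing_inv_cancel_left _ _ ((isUnit_iff_isUnit_det _).mp hinv)]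
  have normal_eq : (A * 𝒱)ᴴ * (B - A * 𝒱 * Ξ) = 0 := by
    rw [hB𝒱]
    subst h𝒱
    refine conjTranspose_mul_sub_mul_eq_zero_of_harmonic
      (conjTranspose_blockCat_castSucc_mul_self horth)
      (conjTranspose_blockCat_castSucc_mul_last horth)
      (conjTranspose_mul_self_of_blockCat horth _) ?_ hℋ (hℳ' ▸ hℋℳΞ)
    rw [harnoldi, Matrix.mul_assoc]
  simpa only [hX, Matrix.mul_assoc] using
    frobNorm_sub_mul_le_of_conjTranspose_mul_sub_eq_zero normal_eq Y
end
end
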